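/- arXiv:2107.07550 — 4 statements merged into one kernel-verified Lean document; each statement's English description precedes it below -/
import Mathlib

section
/- Let A be a strictly upper triangular n×n complex matrix and let A* denote its conjugate transpose. Then the Frobenius norm of the commutator [A,A*] = AA* - A*A satisfies |[A,A*]| ≥ |A|²/2^(n-1), where |A|² = tr(AA*). -/
/-!
Let `r i` and `c i` be the squared norms of the `i`-th row and column of `A`. The diagonal entries
of `[A, Aᴴ]` are `r i - c i`, so each `c i - r i` is at most `|[A, Aᴴ]|`. Weighting by the index,
`∑ i, i (c i - r i) = ∑ i j, (j - i) |A i j|²`, which is at least `|A|²` because `A i j = 0`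
unless `j - i ≥ 1`. Hence `|A|² ≤ (∑ i < n, i) |[A, Aᴴ]| = (n choose 2) |[A, Aᴴ]|`, and
`n choose 2 ≤ 2 ^ (n - 1)`.
-/

open Matrix

/-- The squared Frobenius norm of a complex matrix: `|M|² = tr (M Mᴴ)`. -/
noncomputable def frobNormSq {n : ℕ} (M : Matrix (Fin n) (Fin n) ℂ) : ℝ :=
  (Matrix.trace (M * Mᴴ)).re

open Finset Complex

lemma Nat.sum_range_id_le_two_pow_pred (n : ℕ) : ∑ i ∈ range n, i ≤ 2 ^ (n - 1) := by
  rw [Finset.sum_range_id, ← Nat.choose_two_right]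
  cases n with
  | zero => simp
  | succ m => exact Nat.choose_succ_le_two_pow m 2

section
variable {n : ℕ}

lemma frobNormSq_eq_sum_normSq (M : Matrix (Fin n) (Fin n) ℂ) :
    frobNormSq M = ∑ i, ∑ j, normSq (M i j) := by
  simp [frobNormSq, trace, mul_apply, re_sum, conjTranspose_apply, mul_conj]

lemma abs_re_diag_le_sqrt_frobNormSq (M : Matrix (Fin n) (Fin n) ℂ) (i : Fin n) :
    |(M i i).re| ≤ √(frobNormSq M) := by
  refine Real.abs_le_sqrt ?_
  rw [frobNormSq_eq_sum_normSq]
  calc (M i i).re ^ 2 ≤ normSq (M i i) := by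
        rw [normSq_apply]; nlinarith [sq_nonneg (M i i).im]
    _ ≤ ∑ j, normSq (M i j) :=
        single_le_sum (fun j _ => normSq_nonneg _) (mem_univ i)
    _ ≤ ∑ k, ∑ j, normSq (M k j) :=
        single_le_sum (f := fun k => ∑ j, normSq (M k j))
          (fun k _ => sum_nonneg fun j _ => normSq_nonneg _) (mem_univ i)

lemma re_diag_commutator_conjTranspose (A : Matrix (Fin n) (Fin n) ℂ) (i : Fin n) :
    ((A * Aᴴ - Aᴴ * A) i i).re = ∑ j, normSq (A i j) - ∑ j, normSq (A j i) := by
  simp [Matrix.sub_apply, mul_apply, conjTranspose_apply, re_sum, mul_conj, mul_comm]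

lemma frobNormSq_le_sum_index_mul_of_strictUpper (A : Matrix (Fin n) (Fin n) ℂ)
    (hA : ∀ i j : Fin n, j ≤ i → A i j = 0) :
    frobNormSq A ≤ ∑ i : Fin n, (i : ℝ) * (∑ j, normSq (A j i) - ∑ j, normSq (A i j)) := by
  have hweights : ∑ i : Fin n, (i : ℝ) * (∑ j, normSq (A j i) - ∑ j, normSq (A i j)) =
      ∑ i : Fin n, ∑ j : Fin n, ((j : ℝ) - i) * normSq (A i j) := by
    simp only [mul_sub, sum_sub_distrib, mul_sum, sub_mul]
    rw [sum_comm (f := fun i j : Fin n => (i : ℝ) * normSq (A j i))]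
  rw [hweights, frobNormSq_eq_sum_normSq]
  refine sum_le_sum fun i _ => sum_le_sum fun j _ => ?_
  by_cases hij : j ≤ i
  · simp [hA i j hij]
  · have : (1 : ℝ) ≤ (j : ℝ) - i := by
      have : (i : ℕ) + 1 ≤ j := not_le.mp hij
      rw [le_sub_iff_add_le']; exact_mod_cast this
    nlinarith [normSq_nonneg (A i j)]

end

/-- If `A` is a strictly upper triangular `n × n` complex matrix, then the Frobenius norm of
the commutator `[A, A*] = A Aᴴ - Aᴴ A` satisfies `|[A,A*]| ≥ |A|² / 2^(n-1)`. -/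
theorem stmt_0 (n : ℕ) (A : Matrix (Fin n) (Fin n) ℂ)
    (hA : ∀ i j : Fin n, j ≤ i → A i j = 0) :
    Real.sqrt (frobNormSq (A * Aᴴ - Aᴴ * A)) ≥ frobNormSq A / 2 ^ (n - 1) := by
  set M := √(frobNormSq (A * Aᴴ - Aᴴ * A))
  have hdiag (i : Fin n) : ∑ j, normSq (A j i) - ∑ j, normSq (A i j) ≤ M := by
    have := abs_re_diag_le_sqrt_frobNormSq (A * Aᴴ - Aᴴ * A) i
    rw [re_diag_commutator_conjTranspose, abs_sub_comm] at this
    exact (abs_le.mp this).2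
  have hindex : ∑ i : Fin n, (i : ℝ) ≤ 2 ^ (n - 1) := by
    rw [Fin.sum_univ_eq_sum_range (fun i => (i : ℝ)), ← Nat.cast_sum, ← Nat.cast_ofNat,
      ← Nat.cast_pow]
    exact Nat.cast_le.mpr (Nat.sum_range_id_le_two_pow_pred n)
  rw [ge_iff_le, div_le_iff₀' (by positivity)]
  calc frobNormSq A
      ≤ ∑ i : Fin n, (i : ℝ) * (∑ j, normSq (A j i) - ∑ j, normSq (A i j)) :=
        frobNormSq_le_sum_index_mul_of_strictUpper A hA
    _ ≤ ∑ i : Fin n, (i : ℝ) * M := sum_le_sum fun i _ => by gcongr; exact hdiag i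
    _ ≤ 2 ^ (n - 1) * M := by rw [← sum_mul]; gcongr
end

section
/- Let A be a nilpotent n×n complex matrix, let H be a Hermitian positive definite n×n matrix, and let A* := H (conjugate-transpose of A) H^{-1} be the adjoint of A with respect to the inner product defined by H. Then |[A,A*]|_H ≥ |A|_H²/2^(n-1), where |M|_H² = tr(M M*) with adjoints taken with respect to H. -/
/-!
Write `H = S Sᴴ` with `S` invertible. Conjugation by `S` turns the `H`-adjoint into the
conjugate transpose and `|·|_H²` into the squared Frobenius norm, so we may assume `H = 1`;
let `B` be the conjugated matrix and `C = [B, Bᴴ]`.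

Let `P_k` be the orthogonal projection onto `ker B^k`. Then `Re tr (P_k C) = |P_k B|² - |B P_k|²`,
and `B P_{k+1} = P_k B P_{k+1}` gives `|B P_{k+1}|² ≤ |P_k B|²`. If `B^(m+1) = 0`, then
`P_{m+1} = 1` and `P_0 = 0`, and telescoping yields `|B|² ≤ ∑_{k=1}^{m} Re tr (P_k C)`. By
Cauchy–Schwarz each term is at most `|P_k| |C| ≤ √n |C|`, and `(n - 1) √n ≤ 2^(n-1)`.
-/

open Matrix
open scoped ComplexOrder

/-- The adjoint of a matrix `A` with respect to the inner product `⟨x,y⟩_H = y* H x`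
defined by a Hermitian positive definite matrix `H`: `A* = H Aᴴ H⁻¹`. -/
noncomputable def adjWrt {n : ℕ} (H A : Matrix (Fin n) (Fin n) ℂ) :
    Matrix (Fin n) (Fin n) ℂ :=
  H * Aᴴ * H⁻¹

/-- The squared `H`-norm of a matrix: `|M|_H² = tr (M M*)`, with the adjoint taken with
respect to the Hermitian positive definite matrix `H`. -/
noncomputable def normSqWrt {n : ℕ} (H M : Matrix (Fin n) (Fin n) ℂ) : ℝ :=
  (Matrix.trace (M * adjWrt H M)).re

namespace Matrix

theorem conj_pow_of_isUnit {ι R : Type*} [Fintype ι] [DecidableEq ι] [CommRing R]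
    {S : Matrix ι ι R} (hS : IsUnit S) (X : Matrix ι ι R) (k : ℕ) :
    (S * X * S⁻¹) ^ k = S * X ^ k * S⁻¹ := by
  simpa only [coe_units_inv, hS.unit_spec] using Units.conj_pow hS.unit X k

variable {𝕜 ι : Type*} [RCLike 𝕜] [Fintype ι]

noncomputable def frobeniusNormSq (X : Matrix ι ι 𝕜) : ℝ :=
  RCLike.re (X * Xᴴ).trace

theorem frobeniusNormSq_nonneg (X : Matrix ι ι 𝕜) : 0 ≤ frobeniusNormSq X :=
  (RCLike.nonneg_iff.mp (posSemidef_self_mul_conjTranspose X).trace_nonneg).1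

@[simp]
theorem frobeniusNormSq_zero : frobeniusNormSq (0 : Matrix ι ι 𝕜) = 0 := by
  simp [frobeniusNormSq]

theorem frobeniusNormSq_conjTranspose (X : Matrix ι ι 𝕜) :
    frobeniusNormSq Xᴴ = frobeniusNormSq X := by
  rw [frobeniusNormSq, frobeniusNormSq, conjTranspose_conjTranspose, trace_mul_comm]

variable {P : Matrix ι ι 𝕜}

theorem frobeniusNormSq_mul_isStarProjection (hP : IsStarProjection P)
    (X : Matrix ι ι 𝕜) : frobeniusNormSq (X * P) = RCLike.re (P * (Xᴴ * X)).trace := by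
  have hPP : P * P = P := hP.isIdempotentElem
  have hPH : Pᴴ = P := hP.isSelfAdjoint.star_eq
  have : X * P * (X * P)ᴴ = X * (P * Xᴴ) := by
    rw [conjTranspose_mul, hPH, ← mul_assoc, mul_assoc X, hPP, mul_assoc]
  rw [frobeniusNormSq, this, trace_mul_comm, mul_assoc]

theorem frobeniusNormSq_isStarProjection_mul (hP : IsStarProjection P) (X : Matrix ι ι 𝕜) :
    frobeniusNormSq (P * X) = RCLike.re (P * (X * Xᴴ)).trace := by
  rw [← frobeniusNormSq_conjTranspose, conjTranspose_mul, ← star_eq_conjTranspose P,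
    hP.isSelfAdjoint.star_eq, frobeniusNormSq_mul_isStarProjection hP,
    conjTranspose_conjTranspose]

theorem re_trace_isStarProjection_mul_commutator (hP : IsStarProjection P)
    (B : Matrix ι ι 𝕜) :
    RCLike.re (P * (B * Bᴴ - Bᴴ * B)).trace =
      frobeniusNormSq (P * B) - frobeniusNormSq (B * P) := by
  rw [frobeniusNormSq_isStarProjection_mul hP, frobeniusNormSq_mul_isStarProjection hP,
    ← map_sub, ← trace_sub, mul_sub]

variable [DecidableEq ι]

theorem frobeniusNormSq_mul_isStarProjection_le (hP : IsStarProjection P)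
    (X : Matrix ι ι 𝕜) : frobeniusNormSq (X * P) ≤ frobeniusNormSq X := by
  have hsplit :
      frobeniusNormSq X = frobeniusNormSq (X * P) + frobeniusNormSq (X * (1 - P)) := by
    rw [frobeniusNormSq_mul_isStarProjection hP,
      frobeniusNormSq_mul_isStarProjection hP.one_sub, ← map_add, ← trace_add, ← add_mul,
      add_sub_cancel, one_mul, frobeniusNormSq, trace_mul_comm]
  linarith [frobeniusNormSq_nonneg (X * (1 - P))]

theorem frobeniusNormSq_le_card_of_isStarProjection (hP : IsStarProjection P) :
    frobeniusNormSq P ≤ Fintype.card ι := by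
  simpa [frobeniusNormSq] using frobeniusNormSq_mul_isStarProjection_le hP 1

theorem re_trace_mul_conjTranspose_le (X Y : Matrix ι ι 𝕜) :
    RCLike.re (X * Yᴴ).trace ≤ √(frobeniusNormSq X) * √(frobeniusNormSq Y) := by
  -- The Frobenius inner product `⟪W, Z⟫ = tr (Z Wᴴ)` is the one Mathlib induces by weight `1`.
  let := toMatrixSeminormedAddCommGroup (1 : Matrix ι ι 𝕜) PosSemidef.one
  let := toMatrixInnerProductSpace (1 : Matrix ι ι 𝕜) PosSemidef.one
  have hinner (Z W : Matrix ι ι 𝕜) : inner 𝕜 W Z = (Z * Wᴴ).trace := by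
    change (Z * 1 * Wᴴ).trace = _
    rw [Matrix.mul_one]
  have hnorm (Z : Matrix ι ι 𝕜) : ‖Z‖ = √(frobeniusNormSq Z) := by
    rw [norm_eq_sqrt_re_inner (𝕜 := 𝕜), hinner, frobeniusNormSq]
  rw [← hinner, ← hnorm, ← hnorm, mul_comm]
  exact re_inner_le_norm Y X

theorem re_trace_isStarProjection_mul_le (hP : IsStarProjection P) {C : Matrix ι ι 𝕜}
    (hC : C.IsHermitian) :
    RCLike.re (P * C).trace ≤ √(Fintype.card ι) * √(frobeniusNormSq C) :=
  calc RCLike.re (P * C).trace = RCLike.re (P * Cᴴ).trace := by rw [hC.eq]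
    _ ≤ √(frobeniusNormSq P) * √(frobeniusNormSq C) := re_trace_mul_conjTranspose_le _ _
    _ ≤ √(Fintype.card ι) * √(frobeniusNormSq C) := by
      gcongr
      exact frobeniusNormSq_le_card_of_isStarProjection hP

theorem exists_isStarProjection_ker (M : Matrix ι ι 𝕜) :
    ∃ P : Matrix ι ι 𝕜, IsStarProjection P ∧ M * P = 0 ∧ ∀ X, M * X = 0 → P * X = X := by
  let e := toEuclideanCLM (n := ι) (𝕜 := 𝕜)
  let K : Submodule 𝕜 (EuclideanSpace 𝕜 ι) := (e M).ker
  refine ⟨e.symm K.starProjection, isStarProjection_starProjection.map e.symm, ?_,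
    fun X hX => ?_⟩
  · refine e.injective (?_ : e _ = e 0)
    rw [map_mul e, map_zero e, e.apply_symm_apply]
    ext1 x
    exact K.starProjection_apply_mem x
  · refine e.injective (?_ : e _ = e X)
    rw [map_mul e, e.apply_symm_apply]
    ext1 x
    have hx : e X x ∈ K := by
      simpa [K] using congr(e $hX x)
    exact K.starProjection_eq_self_iff.mpr hx

theorem frobeniusNormSq_le_of_pow_succ_eq_zero {B : Matrix ι ι 𝕜} {m : ℕ}
    (hB : B ^ (m + 1) = 0) :
    frobeniusNormSq B ≤ m * √(Fintype.card ι) * √(frobeniusNormSq (B * Bᴴ - Bᴴ * B)) := by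
  set C := B * Bᴴ - Bᴴ * B
  have hC : C.IsHermitian :=
    (isHermitian_mul_conjTranspose_self B).sub (isHermitian_conjTranspose_mul_self B)
  choose P hP hBP hfix using fun k => exists_isStarProjection_ker (B ^ k)
  set g : ℕ → ℝ := fun k => frobeniusNormSq (P k * B)
  have hP0 : P 0 = 0 := by simpa using hBP 0
  have hPm : P (m + 1) = 1 := by simpa using hfix (m + 1) 1 (by rw [hB, zero_mul])
  have hstep (k : ℕ) : frobeniusNormSq (B * P (k + 1)) ≤ g k := by
    have hfixed : P k * (B * P (k + 1)) = B * P (k + 1) :=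
      hfix k _ (by rw [← mul_assoc, ← pow_succ, hBP])
    rw [← hfixed, ← mul_assoc]
    exact frobeniusNormSq_mul_isStarProjection_le (hP (k + 1)) _
  calc frobeniusNormSq B = frobeniusNormSq (B * P (m + 1)) := by rw [hPm, mul_one]
    _ ≤ g m := hstep m
    _ = ∑ k ∈ Finset.range m, (g (k + 1) - g k) := by
      rw [Finset.sum_range_sub g m]
      simp [g, hP0]
    _ ≤ ∑ k ∈ Finset.range m, RCLike.re (P (k + 1) * C).trace := by
      gcongr with k
      rw [re_trace_isStarProjection_mul_commutator (hP (k + 1))]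
      linarith [hstep k]
    _ ≤ ∑ k ∈ Finset.range m, √(Fintype.card ι) * √(frobeniusNormSq C) := by
      gcongr with k
      exact re_trace_isStarProjection_mul_le (hP (k + 1)) hC
    _ = m * √(Fintype.card ι) * √(frobeniusNormSq C) := by
      rw [Finset.sum_const, Finset.card_range, nsmul_eq_mul, mul_assoc]

end Matrix

theorem sq_mul_succ_le_four_pow : ∀ m : ℕ, m ^ 2 * (m + 1) ≤ 4 ^ m
  | 0 | 1 | 2 => by norm_num
  | m + 3 => by
    have ih := sq_mul_succ_le_four_pow (m + 2)
    have : (m + 3) ^ 2 * (m + 3 + 1) ≤ 4 * ((m + 2) ^ 2 * (m + 2 + 1)) := by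
      ring_nf
      nlinarith
    have h4 : 4 ^ (m + 3) = 4 * 4 ^ (m + 2) := by ring
    omega

theorem nat_mul_sqrt_succ_le_two_pow (m : ℕ) : (m : ℝ) * √(m + 1) ≤ 2 ^ m := by
  rw [← pow_le_pow_iff_left₀ (by positivity) (by positivity) two_ne_zero, mul_pow,
    Real.sq_sqrt (by positivity), ← pow_mul, mul_comm m, pow_mul]
  exact_mod_cast sq_mul_succ_le_four_pow m

section AdjointWrt

variable {n : ℕ} {S : Matrix (Fin n) (Fin n) ℂ}

theorem adjWrt_conj (hS : IsUnit S) (X : Matrix (Fin n) (Fin n) ℂ) :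
    adjWrt (S * Sᴴ) (S * X * S⁻¹) = S * Xᴴ * S⁻¹ := by
  have hdet : IsUnit Sᴴ.det := (isUnit_iff_isUnit_det _).mp hS.star
  rw [adjWrt, Matrix.mul_inv_rev, conjTranspose_mul, conjTranspose_mul,
    conjTranspose_nonsing_inv]
  simp only [← mul_assoc, mul_nonsing_inv_cancel_right _ _ hdet]

theorem commutator_adjWrt_conj (hS : IsUnit S) (X : Matrix (Fin n) (Fin n) ℂ) :
    S * X * S⁻¹ * adjWrt (S * Sᴴ) (S * X * S⁻¹) -
        adjWrt (S * Sᴴ) (S * X * S⁻¹) * (S * X * S⁻¹) =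
      S * (X * Xᴴ - Xᴴ * X) * S⁻¹ := by
  have hdet : IsUnit S.det := (isUnit_iff_isUnit_det _).mp hS
  simp only [adjWrt_conj hS, mul_sub, sub_mul, ← mul_assoc,
    nonsing_inv_mul_cancel_right _ _ hdet]

theorem normSqWrt_conj (hS : IsUnit S) (X : Matrix (Fin n) (Fin n) ℂ) :
    normSqWrt (S * Sᴴ) (S * X * S⁻¹) = frobeniusNormSq X := by
  have hdet : IsUnit S.det := (isUnit_iff_isUnit_det _).mp hS
  rw [normSqWrt, adjWrt_conj hS]
  simp only [← mul_assoc, nonsing_inv_mul_cancel_right _ _ hdet]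
  rw [trace_mul_cycle, nonsing_inv_mul_cancel_left _ _ hdet]
  rfl

end AdjointWrt

/-- Let `A` be a nilpotent `n × n` complex matrix and `H` a Hermitian positive definite
matrix; let `A* = H Aᴴ H⁻¹` be the adjoint of `A` with respect to `H`.  Then
`|[A,A*]|_H ≥ |A|_H² / 2^(n-1)`. -/
theorem stmt_1 (n : ℕ) (A H : Matrix (Fin n) (Fin n) ℂ)
    (hH : H.PosDef) (hnil : A ^ n = 0) :
    Real.sqrt (normSqWrt H (A * adjWrt H A - adjWrt H A * A))
      ≥ normSqWrt H A / 2 ^ (n - 1) := by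
  obtain ⟨S, hS, rfl⟩ : ∃ S, IsUnit S ∧ H = S * Sᴴ := by
    open scoped MatrixOrder in
    exact CStarAlgebra.isStrictlyPositive_iff_eq_mul_star_self.mp hH.isStrictlyPositive
  have hdet : IsUnit S.det := (isUnit_iff_isUnit_det _).mp hS
  obtain ⟨B, rfl⟩ : ∃ B, A = S * B * S⁻¹ :=
    ⟨S⁻¹ * A * S, by simp only [← mul_assoc, mul_nonsing_inv _ hdet, one_mul,
      mul_nonsing_inv_cancel_right _ _ hdet]⟩
  rw [commutator_adjWrt_conj hS, normSqWrt_conj hS, normSqWrt_conj hS]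
  rw [conj_pow_of_isUnit hS] at hnil
  obtain _ | m := n
  · simp [frobeniusNormSq]
  have hB : B ^ (m + 1) = 0 := by
    simpa [← mul_assoc, nonsing_inv_mul_cancel_left _ _ hdet,
      nonsing_inv_mul_cancel_right _ _ hdet] using congr(S⁻¹ * $hnil * S)
  have hbound := frobeniusNormSq_le_of_pow_succ_eq_zero hB
  rw [Fintype.card_fin, Nat.cast_succ] at hbound
  rw [Nat.add_sub_cancel, ge_iff_le, div_le_iff₀ (by positivity), mul_comm]
  calc frobeniusNormSq B ≤ m * √(m + 1) * √(frobeniusNormSq (B * Bᴴ - Bᴴ * B)) := hbound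
    _ ≤ 2 ^ m * √(frobeniusNormSq (B * Bᴴ - Bᴴ * B)) := by
      gcongr
      exact nat_mul_sqrt_succ_le_two_pow m
end

section
/- Let A be a strictly upper triangular n×n complex matrix, and for 1 ≤ i ≤ n set c_i := Σ_{j=i+1}^n |a_{ij}|², so that Σ_{i=1}^{n} c_i = |A|² (Frobenius norm squared). Then there exists an index m with 1 ≤ m ≤ n-1 such that c_m - Σ_{j=1}^{m-1} c_j ≥ |A|²/2^(n-1). -/
open Finset

/-!
If every `c m - Σ_{j<m} c j` were below `ε := |A|² / 2^(n-1)`, the partial sums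
`P k = Σ_{j<k} c j` would satisfy `P (k+1) < 2 P k + ε`, hence `P (n-1) < (2^(n-1) - 1) ε`.
But the last row of `A` vanishes, so `P (n-1) = |A|² = 2^(n-1) ε ≥ (2^(n-1) - 1) ε`.
-/

section GeometricGrowth

variable {K : Type*} [Field K] [LinearOrder K] [IsStrictOrderedRing K]

theorem sum_range_lt_of_forall_sub_sum_range_lt {d : ℕ → K} {ε : K} {N : ℕ}
    (h : ∀ k < N, d k - ∑ j ∈ range k, d j < ε) :
    ∀ k, 1 ≤ k → k ≤ N → ∑ j ∈ range k, d j < (2 ^ k - 1) * ε := by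
  intro k hk1 hkN
  induction k, hk1 using Nat.le_induction with
  | base => simpa [show (2 : K) - 1 = 1 by norm_num] using h 0 (by omega)
  | succ k hk ih =>
    have hdk := h k (by omega)
    rw [sum_range_succ, pow_succ]
    linarith [ih (by omega)]

theorem exists_le_sub_sum_range {d : ℕ → K} {ε : K} {N : ℕ} (hN : 1 ≤ N)
    (h : (2 ^ N - 1) * ε ≤ ∑ j ∈ range N, d j) :
    ∃ k < N, ε ≤ d k - ∑ j ∈ range k, d j := by
  by_contra! hlt
  exact (sum_range_lt_of_forall_sub_sum_range_lt hlt N hN le_rfl).not_ge h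

end GeometricGrowth

theorem Fin.sum_univ_ite_lt_eq_sum_range {M : Type*} [AddCommMonoid M] (f : ℕ → M) {m n : ℕ}
    (hmn : m ≤ n) :
    (∑ j : Fin n, if (j : ℕ) < m then f j else 0) = ∑ k ∈ range m, f k := by
  rw [Fin.sum_univ_eq_sum_range (fun k => if k < m then f k else 0), ← sum_filter]
  congr 1
  ext k
  simp only [mem_filter, mem_range]
  omega

theorem sum_sq_norm_row_eq_of_strictUpper {n : ℕ} {A : Matrix (Fin n) (Fin n) ℂ}
    (hA : ∀ i j : Fin n, j ≤ i → A i j = 0) (i : Fin n) :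
    ∑ j, ‖A i j‖ ^ 2 = ∑ j, if i < j then ‖A i j‖ ^ 2 else 0 := by
  refine sum_congr rfl fun j _ => ?_
  split_ifs with hij
  · rfl
  · simp [hA i j (not_lt.1 hij)]

/-- Let `A` be a strictly upper triangular `n × n` complex matrix (`n ≥ 2`), and for each
row `i` set `c i = Σ_{j > i} |a_{ij}|²`, so that `Σ_i c i = |A|²` (squared Frobenius norm,
which for strictly upper triangular `A` equals `Σ_{i,j} |a_{ij}|²`).  Then there is an
index `m` in the range `1 ≤ m ≤ n-1` (i.e. `m < n - 1` in `0`-based indexing) with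
`c m - Σ_{j < m} c j ≥ |A|² / 2^(n-1)`. -/
theorem stmt_2 (n : ℕ) (hn : 2 ≤ n) (A : Matrix (Fin n) (Fin n) ℂ)
    (hA : ∀ i j : Fin n, j ≤ i → A i j = 0)
    (c : Fin n → ℝ)
    (hc : ∀ i : Fin n, c i = ∑ j : Fin n, if i < j then ‖A i j‖ ^ 2 else 0) :
    ∃ m : Fin n, (m : ℕ) < n - 1 ∧
      c m - (∑ j : Fin n, if j < m then c j else 0)
        ≥ (∑ i : Fin n, ∑ j : Fin n, ‖A i j‖ ^ 2) / 2 ^ (n - 1) := by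
  set S := ∑ i : Fin n, ∑ j : Fin n, ‖A i j‖ ^ 2
  set d : ℕ → ℝ := fun k => if h : k < n then c ⟨k, h⟩ else 0
  have hcd (i : Fin n) : c i = d i := by simp [d]
  have hprefix (m : Fin n) : (∑ j, if j < m then c j else 0) = ∑ k ∈ range m, d k := by
    simp_rw [Fin.lt_def, hcd]
    exact Fin.sum_univ_ite_lt_eq_sum_range d m.is_le'
  have hlast : d (n - 1) = 0 := by
    rw [← hcd ⟨n - 1, by omega⟩, hc]
    refine sum_eq_zero fun j _ => if_neg ?_
    change ¬ n - 1 < (j : ℕ)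
    omega
  have hS : S = ∑ k ∈ range (n - 1), d k := by
    calc S = ∑ i : Fin n, d i := by simp_rw [S, sum_sq_norm_row_eq_of_strictUpper hA, ← hc, hcd]
      _ = ∑ k ∈ range n, d k := Fin.sum_univ_eq_sum_range d n
      _ = ∑ k ∈ range (n - 1), d k := by
        rw [← Nat.sub_add_cancel (by omega : 1 ≤ n), sum_range_succ, Nat.add_sub_cancel, hlast,
          add_zero]
  have hgeom : (2 ^ (n - 1) - 1) * (S / 2 ^ (n - 1)) ≤ ∑ k ∈ range (n - 1), d k := by
    rw [← hS, sub_one_mul, mul_div_cancel₀ _ (by positivity)]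
    linarith [show 0 ≤ S / 2 ^ (n - 1) by positivity]
  obtain ⟨k, hk, hle⟩ := exists_le_sub_sum_range (by omega) hgeom
  refine ⟨⟨k, by omega⟩, hk, ?_⟩
  rw [hprefix, hcd]
  exact hle
end

section
/- Let (E, θ, h) be a harmonic bundle on a complex manifold U, i.e., a Higgs bundle (E, θ) with a Hermitian metric h such that D_h + θ + θ*_h is flat, where D_h is the Chern connection and θ*_h the h-adjoint of θ. Then the (1,1)-form ω = -i·tr(θ*_h ∧ θ) on U is real, semipositive, and closed (dω = 0). -/
open Matrix
open scoped ComplexOrder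

/-- Wirtinger derivative `∂f/∂z_i` of a function on an open set of `ℂⁿ`. -/
noncomputable def wirt {n : ℕ} (i : Fin n) (f : (Fin n → ℂ) → ℂ) (z : Fin n → ℂ) : ℂ :=
  (fderiv ℝ f z (Pi.single i 1) - Complex.I * fderiv ℝ f z (Pi.single i Complex.I)) / 2

/-- Wirtinger derivative `∂f/∂z̄_i`. -/
noncomputable def wirtBar {n : ℕ} (i : Fin n) (f : (Fin n → ℂ) → ℂ) (z : Fin n → ℂ) : ℂ :=
  (fderiv ℝ f z (Pi.single i 1) + Complex.I * fderiv ℝ f z (Pi.single i Complex.I)) / 2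

/-- Entrywise Wirtinger derivative `∂/∂z_i` of a matrix-valued function. -/
noncomputable def wirtM {n r : ℕ} (i : Fin n) (F : (Fin n → ℂ) → Matrix (Fin r) (Fin r) ℂ)
    (z : Fin n → ℂ) : Matrix (Fin r) (Fin r) ℂ :=
  Matrix.of fun p q => wirt i (fun w => F w p q) z

/-- Entrywise Wirtinger derivative `∂/∂z̄_i` of a matrix-valued function. -/
noncomputable def wirtBarM {n r : ℕ} (i : Fin n) (F : (Fin n → ℂ) → Matrix (Fin r) (Fin r) ℂ)
    (z : Fin n → ℂ) : Matrix (Fin r) (Fin r) ℂ :=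
  Matrix.of fun p q => wirtBar i (fun w => F w p q) z

/-- The adjoint of an endomorphism `X` of the fibre with respect to the Hermitian metric
`h`: `X* = h Xᴴ h⁻¹`. -/
noncomputable def adjM {r : ℕ} (h X : Matrix (Fin r) (Fin r) ℂ) : Matrix (Fin r) (Fin r) ℂ :=
  h * Xᴴ * h⁻¹


section AuxHarmonic

variable {n r : ℕ}

private lemma wirt_mul' (i : Fin n) {f g : (Fin n → ℂ) → ℂ} {z : Fin n → ℂ}
    (hf : DifferentiableAt ℝ f z) (hg : DifferentiableAt ℝ g z) :
    wirt i (fun w => f w * g w) z = wirt i f z * g z + f z * wirt i g z := by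
  unfold wirt
  rw [fderiv_fun_mul hf hg]
  simp only [ContinuousLinearMap.add_apply, ContinuousLinearMap.smul_apply, smul_eq_mul]
  ring

private lemma wirtBar_mul' (i : Fin n) {f g : (Fin n → ℂ) → ℂ} {z : Fin n → ℂ}
    (hf : DifferentiableAt ℝ f z) (hg : DifferentiableAt ℝ g z) :
    wirtBar i (fun w => f w * g w) z = wirtBar i f z * g z + f z * wirtBar i g z := by
  unfold wirtBar
  rw [fderiv_fun_mul hf hg]
  simp only [ContinuousLinearMap.add_apply, ContinuousLinearMap.smul_apply, smul_eq_mul]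
  ring

private lemma wirt_sum' {α : Type*} (s : Finset α) (i : Fin n) {f : α → (Fin n → ℂ) → ℂ}
    {z : Fin n → ℂ} (hf : ∀ a ∈ s, DifferentiableAt ℝ (f a) z) :
    wirt i (fun w => ∑ a ∈ s, f a w) z = ∑ a ∈ s, wirt i (f a) z := by
  unfold wirt
  rw [fderiv_fun_sum hf]
  simp only [ContinuousLinearMap.sum_apply]
  rw [Finset.mul_sum, ← Finset.sum_sub_distrib, Finset.sum_div]

private lemma wirtBar_sum' {α : Type*} (s : Finset α) (i : Fin n) {f : α → (Fin n → ℂ) → ℂ}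
    {z : Fin n → ℂ} (hf : ∀ a ∈ s, DifferentiableAt ℝ (f a) z) :
    wirtBar i (fun w => ∑ a ∈ s, f a w) z = ∑ a ∈ s, wirtBar i (f a) z := by
  unfold wirtBar
  rw [fderiv_fun_sum hf]
  simp only [ContinuousLinearMap.sum_apply]
  rw [Finset.mul_sum, ← Finset.sum_add_distrib, Finset.sum_div]

private lemma wirtBar_eq_zero' (i : Fin n) {f : (Fin n → ℂ) → ℂ} {z : Fin n → ℂ}
    (hf : DifferentiableAt ℂ f z) : wirtBar i f z = 0 := by
  have h1 : fderiv ℝ f z = (fderiv ℂ f z).restrictScalars ℝ := hf.fderiv_restrictScalars ℝ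
  have h2 : (Pi.single i Complex.I : Fin n → ℂ) = Complex.I • (Pi.single i 1 : Fin n → ℂ) := by
    ext j
    by_cases hj : j = i
    · subst hj; simp
    · simp [Pi.single_apply, hj]
  unfold wirtBar
  rw [h1, h2]
  simp only [ContinuousLinearMap.coe_restrictScalars', _root_.map_smul, smul_eq_mul]
  rw [← mul_assoc, Complex.I_mul_I]
  ring

private lemma diff_finset_prod' {α : Type*} [DecidableEq α] (s : Finset α)
    {f : α → (Fin n → ℂ) → ℂ} {z : Fin n → ℂ}
    (hf : ∀ a ∈ s, DifferentiableAt ℝ (f a) z) :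
    DifferentiableAt ℝ (fun w => ∏ a ∈ s, f a w) z :=
  (HasFDerivAt.finset_prod (fun a ha => (hf a ha).hasFDerivAt)).differentiableAt

private lemma entryDiff_det {M : (Fin n → ℂ) → Matrix (Fin r) (Fin r) ℂ} {z : Fin n → ℂ}
    (hM : ∀ p q, DifferentiableAt ℝ (fun w => M w p q) z) :
    DifferentiableAt ℝ (fun w => (M w).det) z := by
  simp only [Matrix.det_apply]
  apply DifferentiableAt.fun_sum
  intro σ _
  simp only [Units.smul_def, zsmul_eq_mul]
  exact (differentiableAt_const _).mul (diff_finset_prod' Finset.univ (fun a _ => hM (σ a) a))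

private lemma entryDiff_adjugate {M : (Fin n → ℂ) → Matrix (Fin r) (Fin r) ℂ} {z : Fin n → ℂ}
    (hM : ∀ p q, DifferentiableAt ℝ (fun w => M w p q) z) (p q : Fin r) :
    DifferentiableAt ℝ (fun w => (M w).adjugate p q) z := by
  simp only [Matrix.adjugate_apply]
  apply entryDiff_det
  intro p' q'
  simp only [Matrix.updateRow_apply]
  by_cases hp : p' = q
  · simp only [hp, if_pos rfl]
    exact differentiableAt_const _
  · simp only [if_neg hp]
    exact hM p' q'

private lemma entryDiff_inv {M : (Fin n → ℂ) → Matrix (Fin r) (Fin r) ℂ} {z : Fin n → ℂ}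
    (hM : ∀ p q, DifferentiableAt ℝ (fun w => M w p q) z)
    (hdet : (M z).det ≠ 0) (p q : Fin r) :
    DifferentiableAt ℝ (fun w => (M w)⁻¹ p q) z := by
  have e : (fun w => (M w)⁻¹ p q) = fun w => ((M w).det)⁻¹ * (M w).adjugate p q := by
    funext w
    rw [Matrix.inv_def]
    simp [Ring.inverse_eq_inv', Matrix.smul_apply, smul_eq_mul]
  rw [e]
  exact ((entryDiff_det hM).inv hdet).mul (entryDiff_adjugate hM p q)

private lemma entryDiff_mul {F G : (Fin n → ℂ) → Matrix (Fin r) (Fin r) ℂ} {z : Fin n → ℂ}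
    (hF : ∀ p q, DifferentiableAt ℝ (fun w => F w p q) z)
    (hG : ∀ p q, DifferentiableAt ℝ (fun w => G w p q) z) (p q : Fin r) :
    DifferentiableAt ℝ (fun w => (F w * G w) p q) z := by
  simp only [Matrix.mul_apply]
  exact DifferentiableAt.fun_sum fun l _ => (hF p l).mul (hG l q)

private lemma traceCancel (A B X Y T : Matrix (Fin r) (Fin r) ℂ) :
    trace (((B * Y - Y * B) - (A * X - X * A)) * T)
      + trace (X * (T * A - A * T)) - trace (Y * (T * B - B * T)) = 0 := by
  simp only [Matrix.sub_mul, Matrix.mul_sub, trace_sub]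
  rw [show X * (T * A) = (X * T) * A by rw [Matrix.mul_assoc],
    trace_mul_comm (X * T) A,
    show Y * (T * B) = (Y * T) * B by rw [Matrix.mul_assoc],
    trace_mul_comm (Y * T) B,
    show X * (A * T) = (X * A) * T by rw [Matrix.mul_assoc],
    show Y * (B * T) = (Y * B) * T by rw [Matrix.mul_assoc],
    show A * (X * T) = (A * X) * T by rw [Matrix.mul_assoc],
    show B * (Y * T) = (B * Y) * T by rw [Matrix.mul_assoc]]
  ring

private lemma wirt_trace_mul (i : Fin n) {F G : (Fin n → ℂ) → Matrix (Fin r) (Fin r) ℂ}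
    {z : Fin n → ℂ}
    (hF : ∀ p q, DifferentiableAt ℝ (fun w => F w p q) z)
    (hG : ∀ p q, DifferentiableAt ℝ (fun w => G w p q) z) :
    wirt i (fun w => trace (F w * G w)) z
      = trace (wirtM i F z * G z) + trace (F z * wirtM i G z) := by
  have h1 : (fun w => trace (F w * G w)) = fun w => ∑ p, ∑ q, F w p q * G w q p := by
    funext w
    simp [Matrix.trace, Matrix.diag, Matrix.mul_apply]
  rw [h1, wirt_sum' Finset.univ i
    (fun p _ => DifferentiableAt.fun_sum fun q _ => (hF p q).fun_mul (hG q p))]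
  have h2 : ∀ p : Fin r, wirt i (fun w => ∑ q, F w p q * G w q p) z
      = ∑ q, (wirt i (fun w => F w p q) z * G z q p
          + F z p q * wirt i (fun w => G w q p) z) := by
    intro p
    rw [wirt_sum' Finset.univ i (fun q _ => (hF p q).fun_mul (hG q p))]
    exact Finset.sum_congr rfl fun q _ => wirt_mul' i (hF p q) (hG q p)
  simp only [h2]
  simp [Matrix.trace, Matrix.diag, Matrix.mul_apply, wirtM, Finset.sum_add_distrib]

private lemma wirtBar_trace_mul (i : Fin n) {F G : (Fin n → ℂ) → Matrix (Fin r) (Fin r) ℂ}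
    {z : Fin n → ℂ}
    (hF : ∀ p q, DifferentiableAt ℝ (fun w => F w p q) z)
    (hG : ∀ p q, DifferentiableAt ℝ (fun w => G w p q) z) :
    wirtBar i (fun w => trace (F w * G w)) z
      = trace (wirtBarM i F z * G z) + trace (F z * wirtBarM i G z) := by
  have h1 : (fun w => trace (F w * G w)) = fun w => ∑ p, ∑ q, F w p q * G w q p := by
    funext w
    simp [Matrix.trace, Matrix.diag, Matrix.mul_apply]
  rw [h1, wirtBar_sum' Finset.univ i
    (fun p _ => DifferentiableAt.fun_sum fun q _ => (hF p q).fun_mul (hG q p))]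
  have h2 : ∀ p : Fin r, wirtBar i (fun w => ∑ q, F w p q * G w q p) z
      = ∑ q, (wirtBar i (fun w => F w p q) z * G z q p
          + F z p q * wirtBar i (fun w => G w q p) z) := by
    intro p
    rw [wirtBar_sum' Finset.univ i (fun q _ => (hF p q).fun_mul (hG q p))]
    exact Finset.sum_congr rfl fun q _ => wirtBar_mul' i (hF p q) (hG q p)
  simp only [h2]
  simp [Matrix.trace, Matrix.diag, Matrix.mul_apply, wirtBarM, Finset.sum_add_distrib]

private lemma real_aux (h X Y : Matrix (Fin r) (Fin r) ℂ) (hh : h.IsHermitian) :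
    star (trace (X * (h * Yᴴ * h⁻¹))) = trace (Y * (h * Xᴴ * h⁻¹)) := by
  rw [← trace_conjTranspose]
  simp only [conjTranspose_mul, conjTranspose_conjTranspose, hh.eq, hh.inv.eq]
  rw [trace_mul_comm]
  rw [show Xᴴ * (h⁻¹ * (Y * h)) = (Xᴴ * h⁻¹) * (Y * h) by simp [Matrix.mul_assoc]]
  rw [trace_mul_comm]
  simp [Matrix.mul_assoc]

private lemma trace_nonneg' {P : Matrix (Fin r) (Fin r) ℂ} (hP : P.PosSemidef) :
    0 ≤ trace P := by
  rw [Matrix.trace]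
  apply Finset.sum_nonneg
  intro p _
  have h2 := hP.dotProduct_mulVec_nonneg (Pi.single p 1)
  simpa [dotProduct, mulVec, Pi.single_apply] using h2

open scoped MatrixOrder in
private lemma pos_aux (h S : Matrix (Fin r) (Fin r) ℂ) (hh : h.PosSemidef) :
    0 ≤ trace (S * (h * Sᴴ * h⁻¹)) := by
  set g := CFC.sqrt h with hgdef
  have hg : g * g = h := CFC.sqrt_mul_sqrt_self h (nonneg_iff_posSemidef.mpr hh)
  have hgH : gᴴ = g := (nonneg_iff_posSemidef.mp (CFC.sqrt_nonneg h)).1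
  have hN : (g⁻¹ * S * g)ᴴ = g * Sᴴ * g⁻¹ := by
    simp [conjTranspose_mul, conjTranspose_nonsing_inv, hgH, Matrix.mul_assoc]
  have key : trace (S * (h * Sᴴ * h⁻¹)) = trace ((g⁻¹ * S * g) * (g⁻¹ * S * g)ᴴ) := by
    rw [hN, ← hg, Matrix.mul_inv_rev]
    rw [show S * (g * g * Sᴴ * (g⁻¹ * g⁻¹)) = (S * (g * (g * (Sᴴ * g⁻¹)))) * g⁻¹ by
      simp [Matrix.mul_assoc]]
    rw [trace_mul_comm]
    simp [Matrix.mul_assoc]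
  rw [key]
  exact trace_nonneg' (posSemidef_self_mul_conjTranspose _)

private lemma quad_expand (h : Matrix (Fin r) (Fin r) ℂ) (θ : Fin n → Matrix (Fin r) (Fin r) ℂ)
    (x : Fin n → ℂ) :
    star x ⬝ᵥ ((Matrix.of fun j k : Fin n => trace (θ j * (h * (θ k)ᴴ * h⁻¹))) *ᵥ x)
      = trace ((∑ j, star (x j) • θ j) * (h * (∑ j, star (x j) • θ j)ᴴ * h⁻¹)) := by
  simp only [dotProduct, mulVec, Matrix.of_apply, conjTranspose_sum, conjTranspose_smul,
    Matrix.mul_sum, Matrix.sum_mul, Matrix.mul_smul, Matrix.smul_mul, trace_sum, trace_smul,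
    Finset.mul_sum, smul_eq_mul, Pi.star_apply, star_star]
  rw [Finset.sum_comm]
  refine Finset.sum_congr rfl fun k _ => Finset.sum_congr rfl fun j _ => ?_
  ring

end AuxHarmonic

/-- A harmonic bundle on an open set `U ⊆ ℂⁿ`, in a holomorphic trivialization of `E`:
a Hermitian metric `h` (a smooth family of positive definite matrices), a holomorphic Higgs
field `θ = Σ θ_i dz_i` with `θ ∧ θ = 0`, such that `D_h + θ + θ*_h` is flat; flatness is
expressed through the Kähler identities `D_h θ = 0` and `D_h θ*_h = 0` written in
coordinates using the connection form `A_i = h⁻¹ ∂_i h` of the Chern connection `D_h`.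
Then the `(1,1)`-form `ω = -i tr(θ*_h ∧ θ) = i Σ H_{jk} dz_j ∧ dz̄_k`, with coefficients
`H_{jk} = tr(θ_j ∘ θ_k^{*h})`, is real (its coefficient matrix is Hermitian), semipositive,
and closed (`dω = 0`, i.e. `∂_i H_{jk} = ∂_j H_{ik}` and `∂̄_i H_{jk} = ∂̄_k H_{ji}`). -/
theorem stmt_11 {n r : ℕ} (U : Set (Fin n → ℂ)) (hU : IsOpen U)
    (h : (Fin n → ℂ) → Matrix (Fin r) (Fin r) ℂ)
    (θ : Fin n → (Fin n → ℂ) → Matrix (Fin r) (Fin r) ℂ)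
    -- `h` is a smooth Hermitian metric
    (hsmooth : ∀ p q : Fin r, ContDiffOn ℝ (⊤ : ℕ∞) (fun z => h z p q) U)
    (hpos : ∀ z ∈ U, (h z).PosDef)
    -- `θ` is holomorphic and `θ ∧ θ = 0`
    (hholo : ∀ (i : Fin n) (p q : Fin r), DifferentiableOn ℂ (fun z => θ i z p q) U)
    (hhiggs : ∀ z ∈ U, ∀ i j : Fin n, θ i z * θ j z = θ j z * θ i z)
    -- `D_h θ = 0` ((2,0)-part; the (1,1)-part `∂̄ θ = 0` is the holomorphy of `θ`)
    (hDθ : ∀ z ∈ U, ∀ i j : Fin n,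
      wirtM i (θ j) z - wirtM j (θ i) z
        + (((h z)⁻¹ * wirtM i h z) * θ j z - θ j z * ((h z)⁻¹ * wirtM i h z))
        - (((h z)⁻¹ * wirtM j h z) * θ i z - θ i z * ((h z)⁻¹ * wirtM j h z)) = 0)
    -- `D_h θ*_h = 0`, (1,1)-part
    (hDθstar₁ : ∀ z ∈ U, ∀ i j : Fin n,
      wirtM i (fun w => adjM (h w) (θ j w)) z
        + (((h z)⁻¹ * wirtM i h z) * adjM (h z) (θ j z)
            - adjM (h z) (θ j z) * ((h z)⁻¹ * wirtM i h z)) = 0)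
    -- `D_h θ*_h = 0`, (0,2)-part
    (hDθstar₂ : ∀ z ∈ U, ∀ i j : Fin n,
      wirtBarM i (fun w => adjM (h w) (θ j w)) z
        - wirtBarM j (fun w => adjM (h w) (θ i w)) z = 0) :
    -- ω is real:
    (∀ z ∈ U, ∀ j k : Fin n,
      (starRingEnd ℂ) (Matrix.trace (θ j z * adjM (h z) (θ k z)))
        = Matrix.trace (θ k z * adjM (h z) (θ j z))) ∧
    -- ω is semipositive:
    (∀ z ∈ U, Matrix.PosSemidef
      (Matrix.of fun j k : Fin n => Matrix.trace (θ j z * adjM (h z) (θ k z)))) ∧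
    -- ω is closed:
    (∀ z ∈ U, ∀ i j k : Fin n,
      wirt i (fun w => Matrix.trace (θ j w * adjM (h w) (θ k w))) z
        = wirt j (fun w => Matrix.trace (θ i w * adjM (h w) (θ k w))) z ∧
      wirtBar i (fun w => Matrix.trace (θ j w * adjM (h w) (θ k w))) z
        = wirtBar k (fun w => Matrix.trace (θ j w * adjM (h w) (θ i w))) z) := by
    -- differentiability of all relevant entry functions, at points of `U`
  have hzU : ∀ z ∈ U, U ∈ nhds z := fun z hz => hU.mem_nhds hz
  have dθC : ∀ z ∈ U, ∀ (l : Fin n) (p q : Fin r),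
      DifferentiableAt ℂ (fun w => θ l w p q) z :=
    fun z hz l p q => (hholo l p q).differentiableAt (hzU z hz)
  have dθ : ∀ z ∈ U, ∀ (l : Fin n) (p q : Fin r),
      DifferentiableAt ℝ (fun w => θ l w p q) z :=
    fun z hz l p q => (dθC z hz l p q).restrictScalars ℝ
  have dh : ∀ z ∈ U, ∀ p q : Fin r, DifferentiableAt ℝ (fun w => h w p q) z :=
    fun z hz p q => ((hsmooth p q).differentiableOn (by simp)).differentiableAt (hzU z hz)
  have ddet : ∀ z ∈ U, (h z).det ≠ 0 := fun z hz => (hpos z hz).det_pos.ne'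
  have dinv : ∀ z ∈ U, ∀ p q : Fin r, DifferentiableAt ℝ (fun w => (h w)⁻¹ p q) z :=
    fun z hz => entryDiff_inv (dh z hz) (ddet z hz)
  have dθH : ∀ z ∈ U, ∀ (l : Fin n) (p q : Fin r),
      DifferentiableAt ℝ (fun w => (θ l w)ᴴ p q) z := by
    intro z hz l p q
    simp only [Matrix.conjTranspose_apply]
    exact (dθ z hz l q p).star
  have dτ : ∀ z ∈ U, ∀ (l : Fin n) (p q : Fin r),
      DifferentiableAt ℝ (fun w => adjM (h w) (θ l w) p q) z := by
    intro z hz l p q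
    have := entryDiff_mul (F := fun w => h w * (θ l w)ᴴ) (G := fun w => (h w)⁻¹)
      (entryDiff_mul (dh z hz) (dθH z hz l)) (dinv z hz) p q
    simpa [adjM] using this
  -- realness
  have hreal : ∀ z ∈ U, ∀ j k : Fin n,
      (starRingEnd ℂ) (Matrix.trace (θ j z * adjM (h z) (θ k z)))
        = Matrix.trace (θ k z * adjM (h z) (θ j z)) := by
    intro z hz j k
    exact real_aux (h z) (θ j z) (θ k z) (hpos z hz).1
  refine ⟨hreal, ?_, ?_⟩
  · -- semipositivity
    intro z hz
    refine Matrix.PosSemidef.of_dotProduct_mulVec_nonneg ?_ ?_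
    · ext j k
      rw [Matrix.conjTranspose_apply, Matrix.of_apply, Matrix.of_apply]
      exact hreal z hz k j
    · intro x
      show (0 : ℂ) ≤ star x ⬝ᵥ ((Matrix.of fun j k : Fin n =>
        trace (θ j z * ((h z) * (θ k z)ᴴ * (h z)⁻¹))) *ᵥ x)
      rw [quad_expand]
      exact pos_aux (h z) _ (hpos z hz).posSemidef
  · -- closedness
    intro z hz i j k
    constructor
    · -- ∂-part
      have e1 : wirtM i (fun w => adjM (h w) (θ k w)) z
          = adjM (h z) (θ k z) * ((h z)⁻¹ * wirtM i h z)
            - ((h z)⁻¹ * wirtM i h z) * adjM (h z) (θ k z) := by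
        have h' := eq_neg_of_add_eq_zero_left (hDθstar₁ z hz i k)
        rwa [neg_sub] at h'
      have e2 : wirtM j (fun w => adjM (h w) (θ k w)) z
          = adjM (h z) (θ k z) * ((h z)⁻¹ * wirtM j h z)
            - ((h z)⁻¹ * wirtM j h z) * adjM (h z) (θ k z) := by
        have h' := eq_neg_of_add_eq_zero_left (hDθstar₁ z hz j k)
        rwa [neg_sub] at h'
      have e3 : wirtM i (θ j) z - wirtM j (θ i) z
          = (((h z)⁻¹ * wirtM j h z) * θ i z - θ i z * ((h z)⁻¹ * wirtM j h z))
            - (((h z)⁻¹ * wirtM i h z) * θ j z - θ j z * ((h z)⁻¹ * wirtM i h z)) :=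
        eq_sub_of_add_eq (sub_eq_zero.mp (hDθ z hz i j))
      have EA : wirt i (fun w => Matrix.trace (θ j w * adjM (h w) (θ k w))) z
          = trace (wirtM i (θ j) z * adjM (h z) (θ k z))
            + trace (θ j z * wirtM i (fun w => adjM (h w) (θ k w)) z) :=
        wirt_trace_mul i (dθ z hz j) (dτ z hz k)
      have EB : wirt j (fun w => Matrix.trace (θ i w * adjM (h w) (θ k w))) z
          = trace (wirtM j (θ i) z * adjM (h z) (θ k z))
            + trace (θ i z * wirtM j (fun w => adjM (h w) (θ k w)) z) :=
        wirt_trace_mul j (dθ z hz i) (dτ z hz k)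
      have key : trace ((wirtM i (θ j) z - wirtM j (θ i) z) * adjM (h z) (θ k z))
          + trace (θ j z * (adjM (h z) (θ k z) * ((h z)⁻¹ * wirtM i h z)
              - ((h z)⁻¹ * wirtM i h z) * adjM (h z) (θ k z)))
          - trace (θ i z * (adjM (h z) (θ k z) * ((h z)⁻¹ * wirtM j h z)
              - ((h z)⁻¹ * wirtM j h z) * adjM (h z) (θ k z))) = 0 := by
        rw [e3]
        exact traceCancel _ _ _ _ _
      rw [EA, EB, e1, e2]
      rw [Matrix.sub_mul, trace_sub] at key
      linear_combination key
    · -- ∂̄-part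
      have hb1 : wirtBarM i (θ j) z = 0 := by
        ext p q
        simp only [wirtBarM, Matrix.of_apply, Matrix.zero_apply]
        exact wirtBar_eq_zero' i (dθC z hz j p q)
      have hb2 : wirtBarM k (θ j) z = 0 := by
        ext p q
        simp only [wirtBarM, Matrix.of_apply, Matrix.zero_apply]
        exact wirtBar_eq_zero' k (dθC z hz j p q)
      have hb3 : wirtBarM i (fun w => adjM (h w) (θ k w)) z
          = wirtBarM k (fun w => adjM (h w) (θ i w)) z :=
        sub_eq_zero.mp (hDθstar₂ z hz i k)
      have EA : wirtBar i (fun w => Matrix.trace (θ j w * adjM (h w) (θ k w))) z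
          = trace (wirtBarM i (θ j) z * adjM (h z) (θ k z))
            + trace (θ j z * wirtBarM i (fun w => adjM (h w) (θ k w)) z) :=
        wirtBar_trace_mul i (dθ z hz j) (dτ z hz k)
      have EB : wirtBar k (fun w => Matrix.trace (θ j w * adjM (h w) (θ i w))) z
          = trace (wirtBarM k (θ j) z * adjM (h z) (θ i z))
            + trace (θ j z * wirtBarM k (fun w => adjM (h w) (θ i w)) z) :=
        wirtBar_trace_mul k (dθ z hz j) (dτ z hz i)
      rw [EA, EB, hb1, hb2, hb3]
      simp
end
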